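/- For fixed a > 0, the function y ↦ (coth(a) - y coth(ay)) / ((ay coth(ay) - 1)(a coth(a) - 1)) + 4(1 - y^{-2})/(sinh(2a) - 2a) is strictly decreasing on (0, 1). -/

import Mathlib

/-!
Put `u y = a y coth (a y) - 1`, `v = a coth a - 1` and `S = sinh 2a - 2a`. Since
`coth a - y coth (a y) = (v - u y) / a`, the function equals `(u y)⁻¹ / a - 4 / (S y²)` up to an
additive constant, and `(t coth t - 1)⁻¹ = sinh t / (t cosh t - sinh t)`. With `t = a y`, its
derivative is negative iff `8 a³ (t cosh t - sinh t)² < S t³ (sinh t cosh t - t)` for `0 < t < a`.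
This follows by combining `4 (t cosh t - sinh t)² < (sinh t cosh t - t)²` with
`a³ (sinh 2t - 2t) < t³ S`; the latter is the monotonicity of `(sinh x - x) / x³`. Each of the
elementary hyperbolic inequalities has the form `0 < f t` with `f 0 = 0` and is proved by
differentiating, down to one already known.
-/

noncomputable def coth (x : ℝ) : ℝ := Real.cosh x / Real.sinh x

open Real Set

lemma pos_of_hasDerivAt_of_pos {f f' : ℝ → ℝ} (hf : ∀ x, HasDerivAt f (f' x) x) (h₀ : f 0 = 0)
    (hf' : ∀ x, 0 < x → 0 < f' x) {t : ℝ} (ht : 0 < t) : 0 < f t := by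
  have hmono : StrictMonoOn f (Ici 0) :=
    strictMonoOn_of_hasDerivWithinAt_pos (convex_Ici 0)
      (fun x _ ↦ (hf x).continuousAt.continuousWithinAt)
      (fun x _ ↦ (hf x).hasDerivWithinAt) (fun x hx ↦ hf' x (by simpa using hx))
  simpa [h₀] using hmono self_mem_Ici ht.le ht

namespace Real

lemma sinh_lt_mul_cosh {t : ℝ} (ht : 0 < t) : sinh t < t * cosh t := by
  have hf (x : ℝ) : HasDerivAt (fun x ↦ x * cosh x - sinh x) (x * sinh x) x :=
    (((hasDerivAt_id' x).mul (hasDerivAt_cosh x)).sub (hasDerivAt_sinh x)).congr_deriv (by ring)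
  have := pos_of_hasDerivAt_of_pos hf (by simp) (fun x hx ↦ mul_pos hx (sinh_pos_iff.2 hx)) ht
  linarith

lemma two_mul_cosh_sub_two_lt_mul_sinh {t : ℝ} (ht : 0 < t) : 2 * cosh t - 2 < t * sinh t := by
  have hf (x : ℝ) : HasDerivAt (fun x ↦ x * sinh x - 2 * cosh x + 2) (x * cosh x - sinh x) x :=
    ((((hasDerivAt_id' x).mul (hasDerivAt_sinh x)).sub
      ((hasDerivAt_cosh x).const_mul 2)).add_const 2).congr_deriv (by ring)
  have := pos_of_hasDerivAt_of_pos hf (by simp)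
    (fun x hx ↦ sub_pos.2 (sinh_lt_mul_cosh hx)) ht
  linarith

lemma three_mul_sinh_lt_mul_cosh_add_two_mul {t : ℝ} (ht : 0 < t) :
    3 * sinh t < t * cosh t + 2 * t := by
  have hf (x : ℝ) : HasDerivAt (fun x ↦ x * cosh x - 3 * sinh x + 2 * x)
      (x * sinh x - 2 * cosh x + 2) x :=
    ((((hasDerivAt_id' x).mul (hasDerivAt_cosh x)).sub
      ((hasDerivAt_sinh x).const_mul 3)).add ((hasDerivAt_id' x).const_mul 2)).congr_deriv
      (by ring)
  have := pos_of_hasDerivAt_of_pos hf (by simp)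
    (fun x hx ↦ by linarith [two_mul_cosh_sub_two_lt_mul_sinh hx]) ht
  linarith

lemma two_mul_mul_cosh_sub_sinh_lt {t : ℝ} (ht : 0 < t) :
    2 * (t * cosh t - sinh t) < sinh t * cosh t - t := by
  have hf (x : ℝ) : HasDerivAt (fun x ↦ sinh x * cosh x - x - 2 * (x * cosh x - sinh x))
      (2 * sinh x * (sinh x - x)) x :=
    ((((hasDerivAt_sinh x).mul (hasDerivAt_cosh x)).sub (hasDerivAt_id' x)).sub
      ((((hasDerivAt_id' x).mul (hasDerivAt_cosh x)).sub (hasDerivAt_sinh x)).const_mul 2)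
      ).congr_deriv (by linear_combination cosh_sq_sub_sinh_sq x)
  have := pos_of_hasDerivAt_of_pos hf (by simp)
    (fun x hx ↦ mul_pos (mul_pos two_pos (sinh_pos_iff.2 hx))
      (sub_pos.2 (self_lt_sinh_iff.2 hx))) ht
  linarith

lemma strictMonoOn_sinh_sub_self_div_pow_three :
    StrictMonoOn (fun x ↦ (sinh x - x) / x ^ 3) (Ioi 0) := by
  have hf (x : ℝ) (hx : 0 < x) : HasDerivAt (fun x ↦ (sinh x - x) / x ^ 3)
      ((x * cosh x - 3 * sinh x + 2 * x) / x ^ 4) x :=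
    (((hasDerivAt_sinh x).sub (hasDerivAt_id' x)).div (hasDerivAt_pow 3 x)
      (by positivity)).congr_deriv (by simp only [Pi.sub_apply]; field_simp; ring)
  refine strictMonoOn_of_deriv_pos (convex_Ioi 0)
    (fun x hx ↦ (hf x hx).continuousAt.continuousWithinAt) fun x hx ↦ ?_
  rw [interior_Ioi] at hx
  rw [(hf x hx).deriv]
  exact div_pos (by linarith [three_mul_sinh_lt_mul_cosh_add_two_mul hx]) (pow_pos hx 4)

lemma pow_three_mul_sinh_two_mul_sub_lt {t a : ℝ} (ht : 0 < t) (hta : t < a) :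
    a ^ 3 * (sinh (2 * t) - 2 * t) < t ^ 3 * (sinh (2 * a) - 2 * a) := by
  have ha : 0 < a := ht.trans hta
  have h := strictMonoOn_sinh_sub_self_div_pow_three (mem_Ioi.2 (by positivity : 0 < 2 * t))
    (mem_Ioi.2 (by positivity : 0 < 2 * a)) (by linarith)
  rw [div_lt_div_iff₀ (by positivity) (by positivity)] at h
  linear_combination h / 8

lemma eight_mul_mul_cosh_sub_sinh_sq_lt {t a : ℝ} (ht : 0 < t) (hta : t < a) :
    8 * a ^ 3 * (t * cosh t - sinh t) ^ 2 <
      (sinh (2 * a) - 2 * a) * t ^ 3 * (sinh t * cosh t - t) := by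
  have ha : 0 < a := ht.trans hta
  have hD := sub_pos.2 (sinh_lt_mul_cosh ht)
  have hN := two_mul_mul_cosh_sub_sinh_lt ht
  calc 8 * a ^ 3 * (t * cosh t - sinh t) ^ 2
      = 2 * a ^ 3 * (2 * (t * cosh t - sinh t)) ^ 2 := by ring
    _ < 2 * a ^ 3 * (sinh t * cosh t - t) ^ 2 := by gcongr
    _ = a ^ 3 * (sinh (2 * t) - 2 * t) * (sinh t * cosh t - t) := by rw [sinh_two_mul]; ring
    _ < t ^ 3 * (sinh (2 * a) - 2 * a) * (sinh t * cosh t - t) :=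
      mul_lt_mul_of_pos_right (pow_three_mul_sinh_two_mul_sub_lt ht hta) (by linarith)
    _ = _ := by ring

end Real

lemma mul_coth_sub_one_eq {t : ℝ} (ht : 0 < t) :
    t * coth t - 1 = (t * cosh t - sinh t) / sinh t := by
  have := (sinh_pos_iff.2 ht).ne'
  rw [coth]
  field_simp

lemma mul_coth_sub_one_pos {t : ℝ} (ht : 0 < t) : 0 < t * coth t - 1 := by
  rw [mul_coth_sub_one_eq ht]
  exact div_pos (sub_pos.2 (sinh_lt_mul_cosh ht)) (sinh_pos_iff.2 ht)

lemma hasDerivAt_inv_mul_coth_sub_one {t : ℝ} (ht : 0 < t) :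
    HasDerivAt (fun t ↦ (t * coth t - 1)⁻¹)
      (-(sinh t * cosh t - t) / (t * cosh t - sinh t) ^ 2) t := by
  have hD := (sub_pos.2 (sinh_lt_mul_cosh ht)).ne'
  have h : HasDerivAt (fun t ↦ sinh t / (t * cosh t - sinh t))
      (-(sinh t * cosh t - t) / (t * cosh t - sinh t) ^ 2) t :=
    ((hasDerivAt_sinh t).div (((hasDerivAt_id' t).mul (hasDerivAt_cosh t)).sub
      (hasDerivAt_sinh t)) hD).congr_deriv (by
        simp only [Pi.sub_apply, Pi.mul_apply]
        rw [div_left_inj' (pow_ne_zero 2 hD)]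
        linear_combination t * cosh_sq_sub_sinh_sq t)
  refine h.congr_of_eventuallyEq ?_
  filter_upwards [Ioi_mem_nhds ht] with x hx
  rw [mul_coth_sub_one_eq hx, inv_div]

lemma div_mul_sub_one_eq_inv_sub_inv {a c d y : ℝ} (ha : a ≠ 0) (h₁ : a * y * d - 1 ≠ 0)
    (h₂ : a * c - 1 ≠ 0) :
    (c - y * d) / ((a * y * d - 1) * (a * c - 1)) = ((a * y * d - 1)⁻¹ - (a * c - 1)⁻¹) / a := by
  rw [inv_sub_inv h₁ h₂, div_div,
    div_eq_div_iff (mul_ne_zero h₁ h₂) (mul_ne_zero (mul_ne_zero h₁ h₂) ha)]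
  ring

lemma hasDerivAt_inv_mul_coth_sub_one_div_add {a c S y : ℝ} (ha : 0 < a) (hy : 0 < y) :
    HasDerivAt (fun y ↦ ((a * y * coth (a * y) - 1)⁻¹ - c) / a + 4 * (1 - y⁻¹ ^ 2) / S)
      (-(sinh (a * y) * cosh (a * y) - a * y) / (a * y * cosh (a * y) - sinh (a * y)) ^ 2 +
        8 / (S * y ^ 3)) y := by
  have h₁ := (((hasDerivAt_inv_mul_coth_sub_one (mul_pos ha hy)).comp y
    ((hasDerivAt_id' y).const_mul a)).sub_const c).div_const a
  have h₂ := ((((hasDerivAt_inv hy.ne').pow 2).const_sub 1).const_mul 4).div_const S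
  refine (h₁.add h₂).congr_deriv ?_
  have hy₀ := hy.ne'
  have ha₀ := ha.ne'
  simp only [Nat.add_one_sub_one, pow_one]
  field_simp
  ring

lemma eight_div_mul_pow_three_lt {a y : ℝ} (ha : 0 < a) (hy₀ : 0 < y) (hy₁ : y < 1) :
    8 / ((sinh (2 * a) - 2 * a) * y ^ 3) <
      (sinh (a * y) * cosh (a * y) - a * y) / (a * y * cosh (a * y) - sinh (a * y)) ^ 2 := by
  have hay : 0 < a * y := mul_pos ha hy₀
  have hkey := eight_mul_mul_cosh_sub_sinh_sq_lt hay (by nlinarith : a * y < a)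
  have hS : 0 < sinh (2 * a) - 2 * a := by linarith [self_lt_sinh_iff.2 (by positivity : 0 < 2 * a)]
  have hD := sub_pos.2 (sinh_lt_mul_cosh hay)
  rw [div_lt_div_iff₀ (by positivity) (by positivity)]
  refine lt_of_mul_lt_mul_left (a := a ^ 3) ?_ (by positivity)
  linear_combination hkey

theorem stmt_8 (a : ℝ) (ha : 0 < a) :
    StrictAntiOn (fun y : ℝ =>
      (coth a - y * coth (a * y)) / ((a * y * coth (a * y) - 1) * (a * coth a - 1)) +
        4 * (1 - y⁻¹ ^ 2) / (Real.sinh (2 * a) - 2 * a))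
      (Set.Ioo 0 1) := by
  set S := sinh (2 * a) - 2 * a
  have hf : EqOn (fun y ↦ ((a * y * coth (a * y) - 1)⁻¹ - (a * coth a - 1)⁻¹) / a +
      4 * (1 - y⁻¹ ^ 2) / S) (fun y ↦ (coth a - y * coth (a * y)) /
        ((a * y * coth (a * y) - 1) * (a * coth a - 1)) + 4 * (1 - y⁻¹ ^ 2) / S) (Ioo 0 1) :=
    fun y hy ↦ by
      dsimp only
      rw [div_mul_sub_one_eq_inv_sub_inv ha.ne'
        (mul_coth_sub_one_pos (mul_pos ha hy.1)).ne' (mul_coth_sub_one_pos ha).ne']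
  refine StrictAntiOn.congr ?_ hf
  have hderiv (y : ℝ) (hy : 0 < y) := hasDerivAt_inv_mul_coth_sub_one_div_add
    (c := (a * coth a - 1)⁻¹) (S := S) ha hy
  refine strictAntiOn_of_deriv_neg (convex_Ioo 0 1)
    (fun y hy ↦ (hderiv y hy.1).continuousAt.continuousWithinAt) fun y hy ↦ ?_
  rw [interior_Ioo] at hy
  rw [(hderiv y hy.1).deriv, neg_div]
  linarith [eight_div_mul_pow_three_lt ha hy.1 hy.2]
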